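/- If x, y, z are nonempty strings of symbols over an alphabet Σ with f̄(x,z) < 1/2 and f̄(y,z) < 1/2, then f̄(x,y) ≤ ((|x|+|z|)/(|x|+|y|))·f̄(x,z) + ((|z|+|y|)/(|x|+|y|))·f̄(z,y), and moreover f̄(x,y) ≤ f̄(x,z) + f̄(z,y) + 8·f̄(x,z)·f̄(z,y). -/

import Mathlib

/-- A match between two strings `a` and `b`: a finite set of pairs of (0-based) indices,
strictly increasing in both coordinates simultaneously, matching equal symbols. -/
def IsMatch {α : Type*} (a b : List α) (M : Finset (ℕ × ℕ)) : Prop :=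
  (∀ p ∈ M, p.1 < a.length ∧ p.2 < b.length ∧ a[p.1]? = b[p.2]?) ∧
  (∀ p ∈ M, ∀ q ∈ M, (p.1 < q.1 ↔ p.2 < q.2))

/-- The maximal cardinality of a match between `a` and `b`. -/
noncomputable def maxMatch {α : Type*} (a b : List α) : ℕ :=
  sSup {r : ℕ | ∃ M : Finset (ℕ × ℕ), IsMatch a b M ∧ M.card = r}

/-- The `f̄` distance between two strings:
`f̄(a,b) = 1 - 2 · max{|M| : M a match between a and b} / (|a| + |b|)`. -/
noncomputable def fbar {α : Type*} (a b : List α) : ℝ :=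
  1 - 2 * (maxMatch a b : ℝ) / ((a.length : ℝ) + (b.length : ℝ))


/-!
`(|a| + |b|) · f̄(a, b) = |a| + |b| - 2·maxMatch a b` counts the symbols left unmatched by a
maximal match. Composing a maximal match of `x` with `z` and one of `z` with `y` through their
common `z`-positions gives a match of `x` with `y` that loses at most `|z|` pairs, so this
unnormalised count satisfies the ordinary triangle inequality; dividing by `|x| + |y|` is the
first claim. For the second, `f̄(a, b) < 1/2` forces `|b| < 3|a|`, and the weights
`(|x| + |z|)/(|x| + |y|)` and `(|z| + |y|)/(|x| + |y|)` exceed `1` by at most the amount that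
the product term `8·f̄(x,z)·f̄(z,y)` absorbs.
-/

open Finset

section Matches

variable {α : Type*} {a b x y z : List α} {M M₁ M₂ : Finset (ℕ × ℕ)}

namespace IsMatch

theorem injOn_fst (h : IsMatch a b M) : Set.InjOn Prod.fst (M : Set (ℕ × ℕ)) := by
  intro p hp q hq hpq
  have := h.2 p hp q hq
  have := h.2 q hq p hp
  ext <;> omega

theorem injOn_snd (h : IsMatch a b M) : Set.InjOn Prod.snd (M : Set (ℕ × ℕ)) := by
  intro p hp q hq hpq
  have := h.2 p hp q hq
  have := h.2 q hq p hp
  ext <;> omega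

theorem image_fst_subset (h : IsMatch a b M) : M.image Prod.fst ⊆ range a.length := by
  intro i hi
  obtain ⟨p, hp, rfl⟩ := mem_image.1 hi
  exact mem_range.2 (h.1 p hp).1

theorem image_snd_subset (h : IsMatch a b M) : M.image Prod.snd ⊆ range b.length := by
  intro j hj
  obtain ⟨p, hp, rfl⟩ := mem_image.1 hj
  exact mem_range.2 (h.1 p hp).2.1

theorem card_le_length_left (h : IsMatch a b M) : #M ≤ a.length := by
  simpa [card_image_of_injOn h.injOn_fst] using card_le_card h.image_fst_subset

theorem card_le_length_right (h : IsMatch a b M) : #M ≤ b.length := by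
  simpa [card_image_of_injOn h.injOn_snd] using card_le_card h.image_snd_subset

end IsMatch

def matchComp (M₁ M₂ : Finset (ℕ × ℕ)) : Finset (ℕ × ℕ) :=
  ((M₁ ×ˢ M₂).filter fun pq => pq.1.2 = pq.2.1).image fun pq => (pq.1.1, pq.2.2)

theorem mem_matchComp {r : ℕ × ℕ} :
    r ∈ matchComp M₁ M₂ ↔ ∃ p ∈ M₁, ∃ q ∈ M₂, p.2 = q.1 ∧ (p.1, q.2) = r := by
  simp [matchComp, and_assoc]

namespace IsMatch

theorem comp (h₁ : IsMatch x z M₁) (h₂ : IsMatch z y M₂) : IsMatch x y (matchComp M₁ M₂) := by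
  constructor
  · intro r hr
    obtain ⟨p, hp, q, hq, hpq, rfl⟩ := mem_matchComp.1 hr
    obtain ⟨hpx, -, hpz⟩ := h₁.1 p hp
    obtain ⟨-, hqy, hqz⟩ := h₂.1 q hq
    exact ⟨hpx, hqy, hpz.trans (hpq ▸ hqz)⟩
  · intro r hr r' hr'
    obtain ⟨p, hp, q, hq, hpq, rfl⟩ := mem_matchComp.1 hr
    obtain ⟨p', hp', q', hq', hpq', rfl⟩ := mem_matchComp.1 hr'
    rw [h₁.2 p hp p' hp', hpq, hpq', h₂.2 q hq q' hq']

/-- The pairs of `matchComp M₁ M₂` correspond to the `z`-positions used by both matches, and by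
inclusion–exclusion there are at least `#M₁ + #M₂ - |z|` of those. -/
theorem card_add_card_le (h₁ : IsMatch x z M₁) (h₂ : IsMatch z y M₂) :
    #M₁ + #M₂ ≤ #(matchComp M₁ M₂) + z.length := by
  set P := (M₁ ×ˢ M₂).filter fun pq => pq.1.2 = pq.2.1
  set K₁ := M₁.image Prod.snd
  set K₂ := M₂.image Prod.fst
  have hsurj : Set.SurjOn (fun pq : (ℕ × ℕ) × (ℕ × ℕ) => pq.1.2) P ↑(K₁ ∩ K₂) := by
    intro k hk
    obtain ⟨hk₁, hk₂⟩ := mem_inter.1 hk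
    obtain ⟨p, hp, rfl⟩ := mem_image.1 hk₁
    obtain ⟨q, hq, hqp⟩ := mem_image.1 hk₂
    exact ⟨(p, q), mem_filter.2 ⟨mem_product.2 ⟨hp, hq⟩, hqp.symm⟩, rfl⟩
  have hinj : Set.InjOn (fun pq => (pq.1.1, pq.2.2)) (P : Set ((ℕ × ℕ) × (ℕ × ℕ))) := by
    rintro ⟨p, q⟩ hpq ⟨p', q'⟩ hpq' heq
    simp only [P, coe_filter, mem_product, Set.mem_ofPred_eq] at hpq hpq'
    simp only [Prod.mk.injEq] at heq
    have hp : p = p' := h₁.injOn_fst hpq.1.1 hpq'.1.1 heq.1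
    subst hp
    have hq : q = q' := h₂.injOn_fst hpq.1.2 hpq'.1.2 (hpq.2.symm.trans hpq'.2)
    rw [hq]
  have hunion : K₁ ∪ K₂ ⊆ range z.length := union_subset h₁.image_snd_subset h₂.image_fst_subset
  calc #M₁ + #M₂ = #K₁ + #K₂ := by
        rw [card_image_of_injOn h₁.injOn_snd, card_image_of_injOn h₂.injOn_fst]
    _ = #(K₁ ∩ K₂) + #(K₁ ∪ K₂) := (card_inter_add_card_union K₁ K₂).symm
    _ ≤ #P + z.length := add_le_add (card_le_card_of_surjOn _ hsurj)
        ((card_le_card hunion).trans (card_range _).le)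
    _ = #(matchComp M₁ M₂) + z.length := by rw [matchComp, card_image_of_injOn hinj]

end IsMatch

theorem bddAbove_matchCards (a b : List α) :
    BddAbove {r : ℕ | ∃ M : Finset (ℕ × ℕ), IsMatch a b M ∧ #M = r} :=
  ⟨a.length, by rintro r ⟨M, hM, rfl⟩; exact hM.card_le_length_left⟩

theorem IsMatch.card_le_maxMatch (h : IsMatch a b M) : #M ≤ maxMatch a b :=
  le_csSup (bddAbove_matchCards a b) ⟨M, h, rfl⟩

theorem exists_isMatch_card_eq_maxMatch (a b : List α) :
    ∃ M : Finset (ℕ × ℕ), IsMatch a b M ∧ #M = maxMatch a b := by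
  refine Nat.sSup_mem ?_ (bddAbove_matchCards a b)
  exact ⟨0, ∅, ⟨by simp, by simp⟩, card_empty⟩

theorem maxMatch_le_length_left (a b : List α) : maxMatch a b ≤ a.length := by
  obtain ⟨M, hM, hcard⟩ := exists_isMatch_card_eq_maxMatch a b
  exact hcard ▸ hM.card_le_length_left

theorem maxMatch_le_length_right (a b : List α) : maxMatch a b ≤ b.length := by
  obtain ⟨M, hM, hcard⟩ := exists_isMatch_card_eq_maxMatch a b
  exact hcard ▸ hM.card_le_length_right

theorem maxMatch_add_maxMatch_le (x y z : List α) :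
    maxMatch x z + maxMatch z y ≤ maxMatch x y + z.length := by
  obtain ⟨M₁, h₁, hcard₁⟩ := exists_isMatch_card_eq_maxMatch x z
  obtain ⟨M₂, h₂, hcard₂⟩ := exists_isMatch_card_eq_maxMatch z y
  rw [← hcard₁, ← hcard₂]
  exact (h₁.card_add_card_le h₂).trans (by gcongr; exact (h₁.comp h₂).card_le_maxMatch)

/-- Also when `a = b = []`, where `f̄` takes the junk value `1`. -/
theorem length_add_mul_fbar (a b : List α) :
    ((a.length : ℝ) + b.length) * fbar a b = a.length + b.length - 2 * maxMatch a b := by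
  by_cases h : a.length + b.length = 0
  · have := maxMatch_le_length_left a b
    obtain ⟨ha, hb, hm⟩ : a.length = 0 ∧ b.length = 0 ∧ maxMatch a b = 0 := by omega
    simp [ha, hb, hm]
  · have : (a.length : ℝ) + b.length ≠ 0 := by exact_mod_cast h
    rw [fbar]
    field_simp

theorem fbar_nonneg (a b : List α) : 0 ≤ fbar a b := by
  have ha : (maxMatch a b : ℝ) ≤ a.length := by exact_mod_cast maxMatch_le_length_left a b
  have hb : (maxMatch a b : ℝ) ≤ b.length := by exact_mod_cast maxMatch_le_length_right a b
  exact sub_nonneg.2 (div_le_one_of_le₀ (by linarith) (by positivity))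

theorem abs_length_sub_le_mul_fbar (a b : List α) :
    |(a.length : ℝ) - b.length| ≤ ((a.length : ℝ) + b.length) * fbar a b := by
  have ha : (maxMatch a b : ℝ) ≤ a.length := by exact_mod_cast maxMatch_le_length_left a b
  have hb : (maxMatch a b : ℝ) ≤ b.length := by exact_mod_cast maxMatch_le_length_right a b
  rw [length_add_mul_fbar, abs_le]
  constructor <;> linarith

theorem length_lt_three_mul_of_fbar_lt_half (h : fbar a b < 1 / 2) :
    (b.length : ℝ) < 3 * a.length := by
  have hpos : (0 : ℝ) < a.length + b.length := by
    refine lt_of_le_of_ne (by positivity) fun h0 => ?_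
    rw [fbar, ← h0, div_zero] at h
    norm_num at h
  have hm : (maxMatch a b : ℝ) ≤ a.length := by exact_mod_cast maxMatch_le_length_left a b
  have := mul_lt_mul_of_pos_left h hpos
  rw [length_add_mul_fbar] at this
  linarith

theorem length_add_mul_fbar_le (x y z : List α) :
    ((x.length : ℝ) + y.length) * fbar x y ≤
      ((x.length : ℝ) + z.length) * fbar x z + ((z.length : ℝ) + y.length) * fbar z y := by
  have := maxMatch_add_maxMatch_le x y z
  have : (maxMatch x z : ℝ) + maxMatch z y ≤ maxMatch x y + z.length := by exact_mod_cast this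
  rw [length_add_mul_fbar, length_add_mul_fbar, length_add_mul_fbar]
  linarith

theorem fbar_le_weighted_add (z : List α) (hxy : (0 : ℝ) < x.length + y.length) :
    fbar x y ≤ ((x.length : ℝ) + z.length) / ((x.length : ℝ) + y.length) * fbar x z
      + ((z.length : ℝ) + y.length) / ((x.length : ℝ) + y.length) * fbar z y := by
  rw [div_mul_eq_mul_div, div_mul_eq_mul_div, ← add_div, le_div_iff₀ hxy, mul_comm]
  exact length_add_mul_fbar_le x y z

theorem weighted_add_le_add_add_mul {N M L a b : ℝ} (ha : 0 ≤ a) (hb : 0 ≤ b) (hL : 0 ≤ L)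
    (hN : L < 3 * N) (hM : L < 3 * M)
    (haN : |N - L| ≤ (N + L) * a) (hbM : |L - M| ≤ (L + M) * b) :
    (N + L) / (N + M) * a + (L + M) / (N + M) * b ≤ a + b + 8 * a * b := by
  have hNM : 0 < N + M := by linarith
  have hLa : L - N ≤ (N + L) * a := by linarith [neg_abs_le (N - L)]
  have hLb : L - M ≤ (L + M) * b := (le_abs_self _).trans hbM
  rw [div_mul_eq_mul_div, div_mul_eq_mul_div, ← add_div, div_le_iff₀ hNM]
  -- equivalently `(L - M) a + (L - N) b ≤ 8ab (N + M)`; the left side is at most `ab (N + M + 2L)`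
  nlinarith [mul_le_mul_of_nonneg_left hLb ha, mul_le_mul_of_nonneg_left hLa hb,
    mul_nonneg (mul_nonneg ha hb) (by linarith : (0 : ℝ) ≤ 7 * (N + M) - 2 * L)]

end Matches

theorem fbar_approx_triangle_general {α : Type*} (x y z : List α)
    (hxz : fbar x z < 1 / 2) (hyz : fbar y z < 1 / 2) :
    fbar x y ≤ (((x.length : ℝ) + (z.length : ℝ)) / ((x.length : ℝ) + (y.length : ℝ))) * fbar x z
        + (((z.length : ℝ) + (y.length : ℝ)) / ((x.length : ℝ) + (y.length : ℝ))) * fbar z y ∧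
      fbar x y ≤ fbar x z + fbar z y + 8 * fbar x z * fbar z y := by
  have hzx := length_lt_three_mul_of_fbar_lt_half hxz
  have hzy := length_lt_three_mul_of_fbar_lt_half hyz
  have hz : (0 : ℝ) ≤ z.length := by positivity
  have hweighted := fbar_le_weighted_add z (by linarith : (0 : ℝ) < x.length + y.length)
  exact ⟨hweighted, hweighted.trans <| weighted_add_le_add_add_mul (fbar_nonneg x z)
    (fbar_nonneg z y) hz hzx hzy (abs_length_sub_le_mul_fbar x z) (abs_length_sub_le_mul_fbar z y)⟩

/-- Approximate triangle inequality for `f̄`: if `f̄(x,z) < 1/2` and `f̄(y,z) < 1/2`, then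
`f̄(x,y) ≤ ((|x|+|z|)/(|x|+|y|))·f̄(x,z) + ((|z|+|y|)/(|x|+|y|))·f̄(z,y)` and
`f̄(x,y) ≤ f̄(x,z) + f̄(z,y) + 8·f̄(x,z)·f̄(z,y)`. -/
theorem fbar_approx_triangle {α : Type*} (x y z : List α)
    (hx : x ≠ []) (hy : y ≠ []) (hz : z ≠ [])
    (hxz : fbar x z < 1 / 2) (hyz : fbar y z < 1 / 2) :
    fbar x y ≤ (((x.length : ℝ) + (z.length : ℝ)) / ((x.length : ℝ) + (y.length : ℝ))) * fbar x z
        + (((z.length : ℝ) + (y.length : ℝ)) / ((x.length : ℝ) + (y.length : ℝ))) * fbar z y ∧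
      fbar x y ≤ fbar x z + fbar z y + 8 * fbar x z * fbar z y :=
  fbar_approx_triangle_general x y z hxz hyz
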